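/- Shifted-sequence feasibility: suppose constraints d_k z̄_k ≤ M + c_k hold along a trajectory z̄_{t},…,z̄_{t+N} generated by z̄_{k+1} = A_k z̄_k + B_k u_k from inputs (u_t,…,u_{t+N−1}), that z̄_{t+N} ∈ 𝒵_T where 𝒵_T is invariant under all A_k and satisfies d z ≤ M − c for all z ∈ 𝒵_T, d ∈ D, and that the shifted input sequence (u_{t+1},…,u_{t+N−1}, 0) is applied starting from z̄_{t+1}. Then the resulting trajectory satisfies all constraints d_k z̄_k ≤ M + c_k for k = t+1,…,t+N and its terminal state lies in 𝒵_T. -/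
import Mathlib


open Matrix

/-- Shifted-sequence feasibility (core of the recursive feasibility theorem):
the trajectory generated from `z̄_{t+1}` by the shifted inputs
`(u_{t+1},…,u_{t+N−1}, 0)` satisfies all constraints `d_k z̄'_k ≤ M + c_k` for
`k = t+1,…,t+N` and its terminal state lies in the invariant set `𝒵_T`. -/
theorem stmt17 (t Nh : ℕ) (hN : 1 ≤ Nh)
    (A : ℕ → Matrix (Fin 6) (Fin 6) ℝ) (hAinv : ∀ k, IsUnit (A k))
    (B : ℕ → Matrix (Fin 6) (Fin 2) ℝ)
    (u : ℕ → Fin 2 → ℝ) (z : ℕ → Fin 6 → ℝ)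
    (d : ℕ → Fin 6 → ℝ) (c : ℕ → ℝ) (M : ℝ) (hM : 0 < M)
    (ZT : Set (Fin 6 → ℝ))
    (hdyn : ∀ k, z (k + 1) = (A k).mulVec (z k) + (B k).mulVec (u k))
    (hcon : ∀ k, t ≤ k → k ≤ t + Nh → d k ⬝ᵥ z k ≤ M + c k)
    (hterm : z (t + Nh) ∈ ZT)
    (hZinv : ∀ k, ∀ w ∈ ZT, (A k).mulVec w ∈ ZT)
    (hZcon : ∀ w ∈ ZT, ∀ k, d k ⬝ᵥ w ≤ M - c k)
    (z' : ℕ → Fin 6 → ℝ)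
    (hz'0 : z' (t + 1) = z (t + 1))
    (hz'dyn : ∀ k, t + 1 ≤ k → z' (k + 1) =
        (A k).mulVec (z' k) + (B k).mulVec (if k < t + Nh then u k else 0)) :
    (∀ k, t + 1 ≤ k → k ≤ t + Nh → d k ⬝ᵥ z' k ≤ M + c k) ∧
      z' (t + Nh + 1) ∈ ZT := by
  have heq : ∀ k, t + 1 ≤ k → k ≤ t + Nh → z' k = z k := by
    intro k hk1 hk2
    induction k with
    | zero => omega
    | succ n ih =>
      rcases Nat.lt_or_ge (t + 1) (n + 1) with h | h
      · have hn1 : t + 1 ≤ n := by omega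
        have hn2 : n ≤ t + Nh := by omega
        rw [hz'dyn n hn1, if_pos (by omega), ih hn1 hn2, hdyn n]
      · have : n + 1 = t + 1 := by omega
        rw [this, hz'0]
  constructor
  · intro k hk1 hk2
    rw [heq k hk1 hk2]
    exact hcon k (by omega) hk2
  · have h1 : z' (t + Nh) = z (t + Nh) := heq _ (by omega) le_rfl
    rw [hz'dyn (t + Nh) (by omega), if_neg (by omega), h1, Matrix.mulVec_zero,
      add_zero]
    exact hZinv _ _ hterm
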